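/- Let S(t) be a complex polynomial of degree m, let a be a nonzero complex number, and let Q(t) = Σ_{i≥0} q_i t^i be the formal power series solution of the ODE (t·Q'' + Q')·Q − t·(Q')² = S·Q with q_0 = 1/a and q_i = f_S^i(a) for i ≥ 1. Then Q(t) is a polynomial in t if and only if there exists a natural number N with N ≥ m+2 such that a = q_0^{−1} is a common root of the polynomials f_S^i for all N+1 ≤ i ≤ 2N−1. -/

import Mathlib

open PowerSeries

open Polynomial in
/-- The sequence of polynomials `f_S^i` associated to a coefficient sequence `s`. -/
noncomputable def fseq {R : Type*} [CommRing R] [Algebra ℚ R] (s : ℕ → R) : ℕ → Polynomial R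
  | 0 => 0
  | 1 => C (s 0)
  | (k+2) =>
      ((((k : ℚ)+2)^2)⁻¹) •
        (Polynomial.C (s (k+1)) + Polynomial.X *
          ∑ i ∈ (Finset.range (k+1)).attach,
            (Polynomial.C (s i.1) - ((((i.1 : ℤ))+1) * (2*(i.1 : ℤ)+1-((k : ℤ)+1))) • fseq s (i.1+1) ) *
              fseq s (k+1-i.1))
  termination_by k => k
  decreasing_by
  all_goals (first
    | omega
    | (have h := i.2; rw [Finset.mem_range] at h; omega))

/-- A formal power series `Q` solves the ODE
`(t·Q''(t) + Q'(t))·Q(t) − t·(Q'(t))² = S(t)·Q(t)` for the data `S`. -/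
def SolvesODE (S Q : PowerSeries ℂ) : Prop :=
  (X * (d⁄dX ℂ) ((d⁄dX ℂ) Q) + (d⁄dX ℂ) Q) * Q - X * ((d⁄dX ℂ) Q) ^ 2 = S * Q

/-!
Comparing coefficients of `t^(k+1)` in the ODE gives
`(k+2)² q_{k+2} q_0 = ∑_{i ≤ k+1} s_i q_{k+1-i} - ∑_{i ≤ k} (i+1)(2i-k) q_{i+1} q_{k+1-i}`.
If `q_i = 0` for `N < i < 2N` and `deg S + 2 ≤ N`, then for `k + 2 ≥ 2N` every product on the
right has a factor `q_j` with `N < j < k + 2` (or the weight `2i - k` vanishes, at `i + 1 = N`,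
`k + 2 = 2N`), so induction shows `q_{k+2} = 0` because `q_0 ≠ 0`. Conversely, if `Q` is a
polynomial, any large `N` works since `q_i = f_S^i(a)` for `i ≥ 1`.
-/

namespace PowerSeries

variable {R : Type*}

theorem coeff_X_mul_derivative_derivative_add_derivative [CommSemiring R] (Q : R⟦X⟧) (n : ℕ) :
    coeff n (X * d⁄dX R (d⁄dX R Q) + d⁄dX R Q) = ((n : R) + 1) ^ 2 * coeff (n + 1) Q := by
  cases n with
  | zero => simp only [map_add, coeff_zero_X_mul, coeff_derivative]; push_cast; ring
  | succ n => simp only [map_add, coeff_succ_X_mul, coeff_derivative]; push_cast; ring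

theorem coeff_succ_ode_lhs [CommRing R] (Q : R⟦X⟧) (k : ℕ) :
    coeff (k + 1) ((X * d⁄dX R (d⁄dX R Q) + d⁄dX R Q) * Q - X * (d⁄dX R Q) ^ 2) =
      ∑ i ∈ Finset.range (k + 2),
        ((i : R) + 1) * (2 * i - k) * coeff (i + 1) Q * coeff (k + 1 - i) Q := by
  have hfirst : coeff (k + 1) ((X * d⁄dX R (d⁄dX R Q) + d⁄dX R Q) * Q) =
      ∑ i ∈ Finset.range (k + 2), ((i : R) + 1) ^ 2 * coeff (i + 1) Q * coeff (k + 1 - i) Q := by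
    rw [coeff_mul, Finset.Nat.sum_antidiagonal_eq_sum_range_succ_mk]
    simp only [coeff_X_mul_derivative_derivative_add_derivative, mul_assoc]
  have hsecond : coeff (k + 1) (X * (d⁄dX R Q) ^ 2) =
      ∑ i ∈ Finset.range (k + 2),
        ((i : R) + 1) * (k + 1 - i) * coeff (i + 1) Q * coeff (k + 1 - i) Q := by
    rw [coeff_succ_X_mul, sq, coeff_mul, Finset.Nat.sum_antidiagonal_eq_sum_range_succ_mk,
      Finset.sum_range_succ _ (k + 1)]
    push_cast
    rw [sub_self, mul_zero, zero_mul, zero_mul, add_zero]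
    refine Finset.sum_congr rfl fun i hi => ?_
    have hik : i ≤ k := Nat.lt_succ_iff.mp (Finset.mem_range.mp hi)
    rw [coeff_derivative, coeff_derivative, Nat.sub_add_comm hik, Nat.cast_sub hik]
    ring
  rw [map_sub, hfirst, hsecond, ← Finset.sum_sub_distrib]
  refine Finset.sum_congr rfl fun i _ => ?_
  ring

theorem coeff_eq_zero_of_ode_of_gap [CommRing R] [IsDomain R] [CharZero R] {S Q : R⟦X⟧}
    {m N : ℕ} (hode : (X * d⁄dX R (d⁄dX R Q) + d⁄dX R Q) * Q - X * (d⁄dX R Q) ^ 2 = S * Q)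
    (hS : ∀ i, m < i → coeff i S = 0) (hQ : constantCoeff Q ≠ 0) (hN : m + 2 ≤ N)
    (hgap : ∀ i, N < i → i ≤ 2 * N - 1 → coeff i Q = 0) (i : ℕ) (hi : N < i) :
    coeff i Q = 0 := by
  induction i using Nat.strong_induction_on with
  | _ K IH =>
    rcases le_or_gt K (2 * N - 1) with hK | hK
    · exact hgap K hi hK
    obtain ⟨k, rfl⟩ : ∃ k, K = k + 2 := ⟨K - 2, by omega⟩
    have hrhs : coeff (k + 1) (S * Q) = 0 := by
      rw [coeff_mul, Finset.Nat.sum_antidiagonal_eq_sum_range_succ_mk]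
      refine Finset.sum_eq_zero fun i hi => ?_
      rcases le_or_gt i m with him | him
      · rw [IH (k + 1 - i) (by omega) (by omega), mul_zero]
      · rw [hS i him, zero_mul]
    have hlower : ∑ i ∈ Finset.range (k + 1),
        ((i : R) + 1) * (2 * i - k) * coeff (i + 1) Q * coeff (k + 1 - i) Q = 0 := by
      refine Finset.sum_eq_zero fun i hi => ?_
      have hik := Finset.mem_range.mp hi
      rcases lt_or_ge N (i + 1) with h₁ | h₁
      · rw [IH (i + 1) (by omega) h₁]; ring
      rcases lt_or_ge N (k + 1 - i) with h₂ | h₂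
      · rw [IH (k + 1 - i) (by omega) h₂]; ring
      have hweight : (2 * i - k : R) = 0 := by
        rw [show k = 2 * i by omega]; push_cast; ring
      rw [hweight]; ring
    have htop : ((k : R) + 2) ^ 2 * coeff (k + 2) Q * constantCoeff Q = 0 := by
      have h := congrArg (coeff (k + 1)) hode
      rw [coeff_succ_ode_lhs, Finset.sum_range_succ, hlower, hrhs, Nat.sub_self,
        coeff_zero_eq_constantCoeff_apply] at h
      push_cast at h
      rw [← h]; ring
    have hk : ((k : R) + 2) ^ 2 ≠ 0 := pow_ne_zero 2 (by exact_mod_cast Nat.succ_ne_zero (k + 1))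
    simpa [hk, hQ] using htop

end PowerSeries

/-- Let `S` be a complex polynomial of degree `m`, `a ≠ 0`, and let `Q`
be the power series solution of the ODE with `q_0 = 1/a` and `q_i = f_S^i(a)` for `i ≥ 1`.
Then `Q` is a polynomial (all but finitely many coefficients vanish) if and only if there
is `N ≥ m+2` such that `a = q_0⁻¹` is a common root of `f_S^i` for all `N+1 ≤ i ≤ 2N−1`. -/
theorem stmt6 (S : Polynomial ℂ) (m : ℕ) (hS : S.degree = m)
    (a : ℂ) (ha : a ≠ 0) (Q : PowerSeries ℂ)
    (hode : SolvesODE (S : PowerSeries ℂ) Q)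
    (h0 : constantCoeff Q = 1 / a)
    (hcoeff : ∀ i : ℕ, 1 ≤ i → coeff i Q = (fseq (fun n => S.coeff n) i).eval a) :
    (∃ n : ℕ, ∀ i : ℕ, n < i → coeff i Q = 0) ↔
      (∃ N : ℕ, m + 2 ≤ N ∧
        ∀ i : ℕ, N + 1 ≤ i → i ≤ 2 * N - 1 → (fseq (fun n => S.coeff n) i).eval a = 0) := by
  constructor
  · rintro ⟨n, hn⟩
    refine ⟨max n (m + 2), le_max_right _ _, fun i hi _ => ?_⟩
    rw [← hcoeff i (by omega)]
    exact hn i (by omega)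
  · rintro ⟨N, hN, hroot⟩
    have hSdeg : ∀ i, m < i → coeff i (S : PowerSeries ℂ) = 0 := fun i hi => by
      rw [Polynomial.coeff_coe, Polynomial.coeff_eq_zero_of_degree_lt (by rw [hS]; exact_mod_cast hi)]
    have hQ : constantCoeff Q ≠ 0 := by rw [h0]; exact one_div_ne_zero ha
    refine ⟨N, coeff_eq_zero_of_ode_of_gap hode hSdeg hQ hN fun i hi hi' => ?_⟩
    rw [hcoeff i (by omega)]
    exact hroot i hi hi'
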